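/- arXiv:0901.1322 — 4 statements merged into one kernel-verified Lean document; each statement's English description precedes it below -/
import Mathlib

section
/- The order function Ord, regarded as a function of the four endpoints of the two oriented segments (a map (ℝ²)⁴ → ℝ), is continuous at every pair of segments (e₁, e₂) that do not intersect at a point lying in the relative interior of both segments. -/
open MeasureTheory Filter Topology Set

noncomputable section
open scoped Classical

abbrev Pt : Type := EuclideanSpace ℝ (Fin 2)

/-- The point with coordinates `(a, b)` in the plane. -/
def pt (a b : ℝ) : Pt := WithLp.toLp 2 ![a, b]

/-- `d₊(e₁,e₂)` where `e₁` is the oriented segment from `p` to `q` and `e₂` the segment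
from `r` to `s`: the Lebesgue measure of the set of `x ∈ [0, ‖q-p‖]` such that some point
of `e₂` has coordinates `(x, y)` with `y ≥ 0` in the frame centered at `p` with the
`x`-axis directed along `e₁`. It is `0` if `e₁` is degenerate. -/
def dplus (p q r s : Pt) : ℝ :=
  if p = q then 0 else
    (volume {x : ℝ | x ∈ Set.Icc (0 : ℝ) (dist p q) ∧
        ∃ y : ℝ, 0 ≤ y ∧
          p + x • (‖q - p‖⁻¹ • (q - p)) +
              y • pt (-(‖q - p‖⁻¹ • (q - p)) 1) ((‖q - p‖⁻¹ • (q - p)) 0)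
            ∈ segment ℝ r s}).toReal

/-- As `dplus`, but for points below the axis (`y ≤ 0`). -/
def dminus (p q r s : Pt) : ℝ :=
  if p = q then 0 else
    (volume {x : ℝ | x ∈ Set.Icc (0 : ℝ) (dist p q) ∧
        ∃ y : ℝ, y ≤ 0 ∧
          p + x • (‖q - p‖⁻¹ • (q - p)) +
              y • pt (-(‖q - p‖⁻¹ • (q - p)) 1) ((‖q - p‖⁻¹ • (q - p)) 0)
            ∈ segment ℝ r s}).toReal

/-- The order function `Ord(e₁,e₂) = d₊(e₁,e₂) − d₋(e₁,e₂)`. -/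
def ordFn (p q r s : Pt) : ℝ := dplus p q r s - dminus p q r s

/-!
In the frame of `e₁` (origin `p`, first axis along `q - p`, `l = ‖q - p‖`) let `e₂` run from
`(xr, yr)` to `(xs, ys)`. The part of `e₂` in the closed upper half-plane is a segment whose ends
are endpoints of `e₂` or its crossing with the axis, so `d₊` is the length of the overlap of
`[0, l]` with the projection of that segment, and `d₋` is the same length for the reflected
segment. Both lengths depend continuously on the endpoints unless `yr = ys = 0`. In that
collinear case `|Ord|` is at most the overlap of `[0, l]` with `[xr, xs]`, which is continuous
and vanishes because the relative interiors of the segments are disjoint. For degenerate `e₁`,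
`|Ord| ≤ ‖q - p‖`.
-/

open AffineMap

lemma continuousAt_of_eventually_abs_le {α : Type*} [TopologicalSpace α] {f g : α → ℝ} {a : α}
    (hfg : ∀ᶠ x in 𝓝 a, |f x| ≤ g x) (hg : ContinuousAt g a) (hga : g a = 0) :
    ContinuousAt f a := by
  have hfa : f a = 0 := abs_nonpos_iff.1 (hga ▸ hfg.self_of_nhds)
  rw [ContinuousAt, hfa]
  exact squeeze_zero_norm' hfg (hga ▸ hg)

lemma AffineIsometry.image_Ioo_subset_intrinsicInterior_segment {E : Type*}
    [NormedAddCommGroup E] [NormedSpace ℝ E] (f : ℝ →ᵃⁱ[ℝ] E) (a b : ℝ) :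
    f '' Ioo (min a b) (max a b) ⊆ intrinsicInterior ℝ (segment ℝ (f a) (f b)) := by
  rw [← f.coe_toAffineMap, ← image_segment, f.coe_toAffineMap, f.intrinsicInterior_image,
    segment_eq_Icc', ← interior_Icc]
  exact image_mono interior_subset_intrinsicInterior

def overlapLength (l a b : ℝ) : ℝ := max (min l (max a b) - max 0 (min a b)) 0

lemma toReal_volume_Icc_inter_uIcc (l a b : ℝ) :
    (volume (Icc 0 l ∩ uIcc a b)).toReal = overlapLength l a b := by
  rw [uIcc, Icc_inter_Icc, Real.volume_Icc, ENNReal.toReal_ofReal']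
  rfl

lemma overlapLength_nonneg (l a b : ℝ) : 0 ≤ overlapLength l a b := le_max_right _ _

lemma overlapLength_self (l a : ℝ) : overlapLength l a a = 0 := by
  simp only [overlapLength, max_self, min_self]
  exact max_eq_right (by linarith [min_le_right l a, le_max_right 0 a])

lemma overlapLength_comm (l a b : ℝ) : overlapLength l a b = overlapLength l b a := by
  simp only [overlapLength, max_comm a, min_comm a]

lemma overlapLength_le {l : ℝ} (hl : 0 ≤ l) (a b : ℝ) : overlapLength l a b ≤ l :=
  max_le (by linarith [min_le_left l (max a b), le_max_left 0 (min a b)]) hl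

lemma overlapLength_mono (l : ℝ) {a b a' b' : ℝ} (ha : a' ∈ uIcc a b) (hb : b' ∈ uIcc a b) :
    overlapLength l a' b' ≤ overlapLength l a b := by
  unfold overlapLength
  gcongr max (min l ?_ - max 0 ?_) 0
  exacts [max_le ha.2 hb.2, le_min ha.1 hb.1]

lemma overlapLength_eq_zero_of_disjoint {l a b : ℝ}
    (h : Disjoint (Ioo 0 l) (Ioo (min a b) (max a b))) : overlapLength l a b = 0 := by
  rw [Ioo_disjoint_Ioo] at h
  exact max_eq_right (sub_nonpos.2 h)

lemma ContinuousAt.overlapLength {α : Type*} [TopologicalSpace α] {L A B : α → ℝ} {θ₀ : α}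
    (hL : ContinuousAt L θ₀) (hA : ContinuousAt A θ₀) (hB : ContinuousAt B θ₀) :
    ContinuousAt (fun θ => _root_.overlapLength (L θ) (A θ) (B θ)) θ₀ := by
  unfold _root_.overlapLength
  fun_prop

def zeroCrossing (xr xs yr ys : ℝ) : ℝ := (yr * xs - ys * xr) / (yr - ys)

lemma zeroCrossing_comm (xr xs yr ys : ℝ) :
    zeroCrossing xs xr ys yr = zeroCrossing xr xs yr ys := by
  rw [zeroCrossing, zeroCrossing, ← neg_div_neg_eq]
  ring_nf

lemma zeroCrossing_eq_lineMap {yr ys : ℝ} (xr xs : ℝ) (h : yr ≠ ys) :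
    zeroCrossing xr xs yr ys = lineMap xr xs (yr / (yr - ys)) := by
  rw [zeroCrossing, lineMap_apply_ring']
  field_simp [sub_ne_zero.2 h]
  ring

def upperProj (xr xs yr ys : ℝ) : Set ℝ :=
  lineMap xr xs '' {t ∈ Icc (0 : ℝ) 1 | 0 ≤ lineMap yr ys t}

lemma mem_upperProj {xr xs yr ys x : ℝ} :
    x ∈ upperProj xr xs yr ys ↔
      ∃ t ∈ Icc (0 : ℝ) 1, 0 ≤ lineMap yr ys t ∧ lineMap xr xs t = x := by
  simp only [upperProj, mem_image, mem_sep_iff, and_assoc]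

lemma upperProj_comm (xr xs yr ys : ℝ) : upperProj xs xr ys yr = upperProj xr xs yr ys := by
  have key : ∀ xr xs yr ys : ℝ, upperProj xs xr ys yr ⊆ upperProj xr xs yr ys := by
    rintro xr xs yr ys _ ⟨t, ⟨⟨ht0, ht1⟩, hy⟩, rfl⟩
    refine ⟨1 - t, ⟨⟨by linarith, by linarith⟩, ?_⟩, lineMap_apply_one_sub _ _ _⟩
    rwa [lineMap_apply_one_sub]
  exact (key _ _ _ _).antisymm (key _ _ _ _)

lemma upperProj_of_nonneg {yr ys : ℝ} (xr xs : ℝ) (hr : 0 ≤ yr) (hs : 0 ≤ ys) :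
    upperProj xr xs yr ys = uIcc xr xs := by
  have : {t ∈ Icc (0 : ℝ) 1 | 0 ≤ lineMap yr ys t} = Icc 0 1 :=
    sep_eq_self_iff_mem_true.2 fun t ht => by
      rw [lineMap_apply_ring]; nlinarith [ht.1, ht.2]
  rw [upperProj, this, ← segment_eq_image_lineMap, segment_eq_uIcc]

lemma upperProj_of_neg {yr ys : ℝ} (xr xs : ℝ) (hr : yr < 0) (hs : ys < 0) :
    upperProj xr xs yr ys = ∅ := by
  refine image_eq_empty.2 (sep_eq_empty_iff_mem_false.2 fun t ht => ?_)
  rw [lineMap_apply_ring, not_le]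
  rcases eq_or_lt_of_le ht.1 with rfl | ht0
  · simpa using hr
  · nlinarith [ht.2]

lemma upperProj_of_nonneg_of_neg {yr ys : ℝ} (xr xs : ℝ) (hr : 0 ≤ yr) (hs : ys < 0) :
    upperProj xr xs yr ys = uIcc xr (zeroCrossing xr xs yr ys) := by
  have hden : 0 < yr - ys := by linarith
  have hτ : 0 ≤ yr / (yr - ys) := div_nonneg hr hden.le
  have : {t ∈ Icc (0 : ℝ) 1 | 0 ≤ lineMap yr ys t} = Icc 0 (yr / (yr - ys)) := by
    have hτ1 : yr / (yr - ys) ≤ 1 := (div_le_one hden).2 (by linarith)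
    ext t
    simp only [mem_Icc, lineMap_apply_ring', le_div_iff₀ hden]
    constructor
    · rintro ⟨⟨ht0, -⟩, hy⟩; exact ⟨ht0, by linarith⟩
    · rintro ⟨ht0, ht⟩
      exact ⟨⟨ht0, by linarith [(le_div_iff₀ hden).2 ht]⟩, by linarith⟩
  rw [upperProj, this, ← segment_eq_Icc hτ, image_segment, segment_eq_uIcc,
    lineMap_apply_zero, zeroCrossing_eq_lineMap _ _ (sub_pos.1 hden).ne']

-- When `yr, ys < 0` both ends are the same crossing point, so the length is `0`.
def upperLength (l xr xs yr ys : ℝ) : ℝ :=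
  overlapLength l (if 0 ≤ yr then xr else zeroCrossing xr xs yr ys)
    (if 0 ≤ ys then xs else zeroCrossing xr xs yr ys)

lemma toReal_volume_Icc_inter_upperProj (l xr xs yr ys : ℝ) :
    (volume (Icc 0 l ∩ upperProj xr xs yr ys)).toReal = upperLength l xr xs yr ys := by
  rw [upperLength]
  by_cases hr : 0 ≤ yr <;> by_cases hs : 0 ≤ ys <;> simp only [hr, hs, if_true, if_false]
  · rw [upperProj_of_nonneg _ _ hr hs, toReal_volume_Icc_inter_uIcc]
  · rw [upperProj_of_nonneg_of_neg _ _ hr (not_le.1 hs), toReal_volume_Icc_inter_uIcc]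
  · rw [← upperProj_comm, upperProj_of_nonneg_of_neg _ _ hs (not_le.1 hr),
      toReal_volume_Icc_inter_uIcc, zeroCrossing_comm, overlapLength_comm]
  · rw [upperProj_of_neg _ _ (not_le.1 hr) (not_le.1 hs), inter_empty, measure_empty,
      ENNReal.toReal_zero, overlapLength_self]

lemma upperLength_nonneg (l xr xs yr ys : ℝ) : 0 ≤ upperLength l xr xs yr ys :=
  overlapLength_nonneg _ _ _

lemma zeroCrossing_mem_uIcc {yr ys : ℝ} (xr xs : ℝ) (hr : 0 ≤ yr) (hs : ys < 0) :
    zeroCrossing xr xs yr ys ∈ uIcc xr xs := by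
  have hden : 0 < yr - ys := by linarith
  rw [zeroCrossing_eq_lineMap _ _ (sub_pos.1 hden).ne', ← segment_eq_uIcc]
  exact lineMap_mem_segment ℝ _ _ ⟨div_nonneg hr hden.le, (div_le_one hden).2 (by linarith)⟩

lemma upperLength_le_overlapLength (l xr xs yr ys : ℝ) :
    upperLength l xr xs yr ys ≤ overlapLength l xr xs := by
  rw [upperLength]
  by_cases hr : 0 ≤ yr <;> by_cases hs : 0 ≤ ys <;> simp only [hr, hs, if_true, if_false]
  · exact le_rfl
  · exact overlapLength_mono l left_mem_uIcc (zeroCrossing_mem_uIcc _ _ hr (not_le.1 hs))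
  · rw [← zeroCrossing_comm]
    exact overlapLength_mono l (uIcc_comm xs xr ▸ zeroCrossing_mem_uIcc _ _ hs (not_le.1 hr))
      right_mem_uIcc
  · rw [overlapLength_self]; exact overlapLength_nonneg _ _ _

lemma zeroCrossing_zero_left {ys : ℝ} (xr xs : ℝ) (h : ys ≠ 0) :
    zeroCrossing xr xs 0 ys = xr := by
  rw [zeroCrossing]
  field_simp
  ring

section Continuity

variable {α : Type*} [TopologicalSpace α] {L XR XS YR YS : α → ℝ} {θ₀ : α}

lemma ContinuousAt.zeroCrossing (hXR : ContinuousAt XR θ₀) (hXS : ContinuousAt XS θ₀)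
    (hYR : ContinuousAt YR θ₀) (hYS : ContinuousAt YS θ₀) (h : YR θ₀ ≠ YS θ₀) :
    ContinuousAt (fun θ => _root_.zeroCrossing (XR θ) (XS θ) (YR θ) (YS θ)) θ₀ := by
  unfold _root_.zeroCrossing
  exact ((hYR.mul hXS).sub (hYS.mul hXR)).div (hYR.sub hYS) (sub_ne_zero.2 h)

lemma continuousAt_upperEnd (hXR : ContinuousAt XR θ₀) (hXS : ContinuousAt XS θ₀)
    (hYR : ContinuousAt YR θ₀) (hYS : ContinuousAt YS θ₀) (h : 0 < YR θ₀ ∨ YR θ₀ ≠ YS θ₀) :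
    ContinuousAt
      (fun θ => if 0 ≤ YR θ then XR θ else zeroCrossing (XR θ) (XS θ) (YR θ) (YS θ)) θ₀ := by
  rcases lt_trichotomy (YR θ₀) 0 with hneg | hzero | hpos
  · refine (hXR.zeroCrossing hXS hYR hYS (h.resolve_left hneg.not_gt)).congr ?_
    filter_upwards [hYR.eventually (gt_mem_nhds hneg)] with θ hθ
    rw [if_neg hθ.not_ge]
  · have hne : YR θ₀ ≠ YS θ₀ := h.resolve_left hzero.not_gt
    have hcross := hXR.zeroCrossing hXS hYR hYS hne
    rw [ContinuousAt, hzero, zeroCrossing_zero_left _ _ (hzero ▸ hne).symm] at hcross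
    rw [ContinuousAt, if_pos hzero.ge]
    -- Both branches tend to `XR θ₀`.
    exact hXR.tendsto.if' hcross
  · refine hXR.congr ?_
    filter_upwards [hYR.eventually (lt_mem_nhds hpos)] with θ hθ
    rw [if_pos hθ.le]

lemma continuousAt_upperLength (hL : ContinuousAt L θ₀) (hXR : ContinuousAt XR θ₀)
    (hXS : ContinuousAt XS θ₀) (hYR : ContinuousAt YR θ₀) (hYS : ContinuousAt YS θ₀)
    (h : ¬(YR θ₀ = 0 ∧ YS θ₀ = 0)) :
    ContinuousAt (fun θ => upperLength (L θ) (XR θ) (XS θ) (YR θ) (YS θ)) θ₀ := by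
  by_cases hneg : YR θ₀ < 0 ∧ YS θ₀ < 0
  · refine (continuousAt_const (y := (0 : ℝ))).congr ?_
    filter_upwards [hYR.eventually (gt_mem_nhds hneg.1), hYS.eventually (gt_mem_nhds hneg.2)]
      with θ hr hs
    rw [upperLength, if_neg hr.not_ge, if_neg hs.not_ge, overlapLength_self]
  have hr : 0 < YR θ₀ ∨ YR θ₀ ≠ YS θ₀ := by
    by_contra! hc
    rcases hc.1.lt_or_eq with h' | h'
    exacts [hneg ⟨h', hc.2 ▸ h'⟩, h ⟨h', hc.2 ▸ h'⟩]
  have hs : 0 < YS θ₀ ∨ YS θ₀ ≠ YR θ₀ := by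
    by_contra! hc
    rcases hc.1.lt_or_eq with h' | h'
    exacts [hneg ⟨hc.2 ▸ h', h'⟩, h ⟨hc.2 ▸ h', h'⟩]
  have hS := continuousAt_upperEnd hXS hXR hYS hYR hs
  simp only [zeroCrossing_comm] at hS
  exact hL.overlapLength (continuousAt_upperEnd hXR hXS hYR hYS hr) hS

end Continuity

def frameDir (p q : Pt) : Pt := ‖q - p‖⁻¹ • (q - p)

-- Coordinates of `z` in the frame of `dplus`, with origin `p` and first axis `frameDir p q`.
def frameX (p q z : Pt) : ℝ := (z 0 - p 0) * frameDir p q 0 + (z 1 - p 1) * frameDir p q 1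

def frameY (p q z : Pt) : ℝ := (z 1 - p 1) * frameDir p q 0 - (z 0 - p 0) * frameDir p q 1

lemma frameDir_sq_add_sq {p q : Pt} (hpq : p ≠ q) :
    frameDir p q 0 ^ 2 + frameDir p q 1 ^ 2 = 1 := by
  have h := EuclideanSpace.real_norm_sq_eq (frameDir p q)
  rw [Fin.sum_univ_two] at h
  rw [← h, frameDir, norm_smul, norm_inv, norm_norm,
    inv_mul_cancel₀ (norm_ne_zero_iff.2 (sub_ne_zero.2 hpq.symm)), one_pow]

lemma frame_eq_iff {p q : Pt} (hpq : p ≠ q) (x y : ℝ) (z : Pt) :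
    p + x • frameDir p q + y • pt (-frameDir p q 1) (frameDir p q 0) = z ↔
      x = frameX p q z ∧ y = frameY p q z := by
  have hunit := frameDir_sq_add_sq hpq
  constructor
  · rintro rfl
    simp only [frameX, frameY, pt, PiLp.add_apply, PiLp.smul_apply, smul_eq_mul,
      Matrix.cons_val_zero, Matrix.cons_val_one, Matrix.cons_val_fin_one]
    constructor
    · linear_combination (-x) * hunit
    · linear_combination (-y) * hunit
  · rintro ⟨rfl, rfl⟩
    ext i
    fin_cases i
    · simp only [frameX, frameY, pt, Fin.zero_eta, PiLp.add_apply, PiLp.smul_apply, smul_eq_mul,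
        Matrix.cons_val_zero]
      linear_combination (z 0 - p 0) * hunit
    · simp only [frameX, frameY, pt, Fin.mk_one, PiLp.add_apply, PiLp.smul_apply, smul_eq_mul,
        Matrix.cons_val_one, Matrix.cons_val_fin_one]
      linear_combination (z 1 - p 1) * hunit

lemma frameX_lineMap (p q r s : Pt) (t : ℝ) :
    frameX p q (lineMap r s t) = lineMap (frameX p q r) (frameX p q s) t := by
  simp only [frameX, lineMap_apply_module, PiLp.add_apply, PiLp.smul_apply, smul_eq_mul]
  ring

lemma frameY_lineMap (p q r s : Pt) (t : ℝ) :
    frameY p q (lineMap r s t) = lineMap (frameY p q r) (frameY p q s) t := by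
  simp only [frameY, lineMap_apply_module, PiLp.add_apply, PiLp.smul_apply, smul_eq_mul]
  ring

lemma exists_frame_mem_segment_iff {p q : Pt} (r s : Pt) (hpq : p ≠ q) (P : ℝ → Prop) (x : ℝ) :
    (∃ y, P y ∧ p + x • frameDir p q + y • pt (-frameDir p q 1) (frameDir p q 0) ∈ segment ℝ r s)
      ↔ ∃ t ∈ Icc (0 : ℝ) 1, P (lineMap (frameY p q r) (frameY p q s) t) ∧
        lineMap (frameX p q r) (frameX p q s) t = x := by
  have hframe (t y : ℝ) :
      lineMap r s t = p + x • frameDir p q + y • pt (-frameDir p q 1) (frameDir p q 0) ↔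
        lineMap (frameX p q r) (frameX p q s) t = x ∧
          lineMap (frameY p q r) (frameY p q s) t = y := by
    rw [eq_comm, frame_eq_iff hpq, frameX_lineMap, frameY_lineMap, eq_comm, eq_comm (a := y)]
  simp only [segment_eq_image_lineMap, mem_image, hframe]
  constructor
  · rintro ⟨y, hy, t, ht, hx, rfl⟩
    exact ⟨t, ht, hy, hx⟩
  · rintro ⟨t, ht, hy, hx⟩
    exact ⟨_, hy, t, ht, hx, rfl⟩

lemma dplus_eq_upperLength {p q : Pt} (r s : Pt) (hpq : p ≠ q) :
    dplus p q r s = upperLength (dist p q) (frameX p q r) (frameX p q s)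
      (frameY p q r) (frameY p q s) := by
  rw [dplus, if_neg hpq, ← toReal_volume_Icc_inter_upperProj]
  congr 2
  ext x
  rw [mem_inter_iff, mem_upperProj, ← exists_frame_mem_segment_iff r s hpq (0 ≤ ·)]
  rfl

lemma dminus_eq_upperLength {p q : Pt} (r s : Pt) (hpq : p ≠ q) :
    dminus p q r s = upperLength (dist p q) (frameX p q r) (frameX p q s)
      (-frameY p q r) (-frameY p q s) := by
  rw [dminus, if_neg hpq, ← toReal_volume_Icc_inter_upperProj]
  congr 2
  ext x
  have hneg (t : ℝ) : lineMap (-frameY p q r) (-frameY p q s) t =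
      -lineMap (frameY p q r) (frameY p q s) t := by
    simp only [lineMap_apply_ring]; ring
  simp only [mem_inter_iff, mem_upperProj, hneg, neg_nonneg]
  rw [← exists_frame_mem_segment_iff r s hpq (· ≤ 0)]
  rfl

lemma ContinuousAt.frameX {α : Type*} [TopologicalSpace α] {P Q Z : α → Pt} {θ₀ : α}
    (hP : ContinuousAt P θ₀) (hQ : ContinuousAt Q θ₀) (hZ : ContinuousAt Z θ₀)
    (h : P θ₀ ≠ Q θ₀) : ContinuousAt (fun θ => _root_.frameX (P θ) (Q θ) (Z θ)) θ₀ := by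
  have hnorm : ‖Q θ₀ - P θ₀‖ ≠ 0 := norm_ne_zero_iff.2 (sub_ne_zero.2 h.symm)
  unfold _root_.frameX frameDir
  fun_prop (disch := exact hnorm)

lemma ContinuousAt.frameY {α : Type*} [TopologicalSpace α] {P Q Z : α → Pt} {θ₀ : α}
    (hP : ContinuousAt P θ₀) (hQ : ContinuousAt Q θ₀) (hZ : ContinuousAt Z θ₀)
    (h : P θ₀ ≠ Q θ₀) : ContinuousAt (fun θ => _root_.frameY (P θ) (Q θ) (Z θ)) θ₀ := by
  have hnorm : ‖Q θ₀ - P θ₀‖ ≠ 0 := norm_ne_zero_iff.2 (sub_ne_zero.2 h.symm)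
  unfold _root_.frameY frameDir
  fun_prop (disch := exact hnorm)

lemma abs_ordFn_le_overlapLength {p q : Pt} (r s : Pt) (hpq : p ≠ q) :
    |ordFn p q r s| ≤ overlapLength (dist p q) (frameX p q r) (frameX p q s) := by
  rw [ordFn, dplus_eq_upperLength r s hpq, dminus_eq_upperLength r s hpq]
  exact abs_sub_le_iff.2
    ⟨(sub_le_self _ (upperLength_nonneg _ _ _ _ _)).trans (upperLength_le_overlapLength _ _ _ _ _),
      (sub_le_self _ (upperLength_nonneg _ _ _ _ _)).trans (upperLength_le_overlapLength _ _ _ _ _)⟩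

lemma abs_ordFn_le_dist (p q r s : Pt) : |ordFn p q r s| ≤ dist p q := by
  rcases eq_or_ne p q with rfl | hpq
  · simp [ordFn, dplus, dminus]
  · exact (abs_ordFn_le_overlapLength r s hpq).trans (overlapLength_le dist_nonneg _ _)

lemma overlapLength_eq_zero_of_collinear {p q r s : Pt} (hpq : p ≠ q)
    (h : ∀ z : Pt, ¬ (z ∈ intrinsicInterior ℝ (segment ℝ p q) ∧
      z ∈ intrinsicInterior ℝ (segment ℝ r s)))
    (hr : frameY p q r = 0) (hs : frameY p q s = 0) :
    overlapLength (dist p q) (frameX p q r) (frameX p q s) = 0 := by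
  have hqp : q - p ≠ 0 := sub_ne_zero.2 hpq.symm
  have hu : ‖frameDir p q‖ = 1 := by
    rw [frameDir, norm_smul, norm_inv, norm_norm, inv_mul_cancel₀ (norm_ne_zero_iff.2 hqp)]
  let f : ℝ →ᵃⁱ[ℝ] Pt := (AffineIsometryEquiv.vaddConst ℝ p).toAffineIsometry.comp
    (LinearIsometry.toSpanSingleton ℝ Pt hu).toAffineIsometry
  have hf (x : ℝ) :
      f x = p + x • frameDir p q + (0 : ℝ) • pt (-frameDir p q 1) (frameDir p q 0) := by
    simp [f, add_comm]
  have hfz {z : Pt} (hz : frameY p q z = 0) : f (frameX p q z) = z := by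
    rw [hf, frame_eq_iff hpq]; exact ⟨rfl, hz.symm⟩
  have hf0 : f 0 = p := by simp [hf]
  have hfl : f (dist p q) = q := by
    rw [hf, zero_smul, add_zero, frameDir, smul_smul, dist_comm, dist_eq_norm,
      mul_inv_cancel₀ (norm_ne_zero_iff.2 hqp), one_smul, add_sub_cancel]
  apply overlapLength_eq_zero_of_disjoint
  rw [← disjoint_image_iff f.injective]
  have hpq_sub := f.image_Ioo_subset_intrinsicInterior_segment 0 (dist p q)
  rw [min_eq_left dist_nonneg, max_eq_right dist_nonneg, hf0, hfl] at hpq_sub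
  have hrs_sub := f.image_Ioo_subset_intrinsicInterior_segment (frameX p q r) (frameX p q s)
  rw [hfz hr, hfz hs] at hrs_sub
  exact (disjoint_left.2 fun z hz₁ hz₂ => h z ⟨hz₁, hz₂⟩).mono hpq_sub hrs_sub

/-- The order function `Ord`, regarded as a function of the four endpoints
of the two oriented segments (a map `(ℝ²)⁴ → ℝ`), is continuous at every pair of segments
`(e₁, e₂)` that do not intersect at a point lying in the relative interior of both. -/
theorem ordFn_continuousAt (p q r s : Pt)
    (h : ∀ z : Pt, ¬ (z ∈ intrinsicInterior ℝ (segment ℝ p q) ∧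
      z ∈ intrinsicInterior ℝ (segment ℝ r s))) :
    ContinuousAt (fun x : Pt × Pt × Pt × Pt => ordFn x.1 x.2.1 x.2.2.1 x.2.2.2)
      (p, q, r, s) := by
  rcases eq_or_ne p q with rfl | hpq
  · exact continuousAt_of_eventually_abs_le (.of_forall fun θ => abs_ordFn_le_dist _ _ _ _)
      (by fun_prop) (dist_self p)
  have hne : ∀ᶠ θ : Pt × Pt × Pt × Pt in 𝓝 (p, q, r, s), θ.1 ≠ θ.2.1 :=
    (ContinuousAt.ne_iff_eventually_ne (by fun_prop) (by fun_prop)).1 hpq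
  have hL : ContinuousAt (fun θ : Pt × Pt × Pt × Pt => dist θ.1 θ.2.1) (p, q, r, s) := by
    fun_prop
  have hXr : ContinuousAt (fun θ : Pt × Pt × Pt × Pt => frameX θ.1 θ.2.1 θ.2.2.1) (p, q, r, s) :=
    ContinuousAt.frameX (by fun_prop) (by fun_prop) (by fun_prop) hpq
  have hXs : ContinuousAt (fun θ : Pt × Pt × Pt × Pt => frameX θ.1 θ.2.1 θ.2.2.2) (p, q, r, s) :=
    ContinuousAt.frameX (by fun_prop) (by fun_prop) (by fun_prop) hpq
  have hYr : ContinuousAt (fun θ : Pt × Pt × Pt × Pt => frameY θ.1 θ.2.1 θ.2.2.1) (p, q, r, s) :=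
    ContinuousAt.frameY (by fun_prop) (by fun_prop) (by fun_prop) hpq
  have hYs : ContinuousAt (fun θ : Pt × Pt × Pt × Pt => frameY θ.1 θ.2.1 θ.2.2.2) (p, q, r, s) :=
    ContinuousAt.frameY (by fun_prop) (by fun_prop) (by fun_prop) hpq
  by_cases hcol : frameY p q r = 0 ∧ frameY p q s = 0
  · exact continuousAt_of_eventually_abs_le (hne.mono fun θ hθ => abs_ordFn_le_overlapLength _ _ hθ)
      (hL.overlapLength hXr hXs)
      (overlapLength_eq_zero_of_collinear hpq h hcol.1 hcol.2)
  · refine ((continuousAt_upperLength hL hXr hXs hYr hYs hcol).sub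
      (continuousAt_upperLength hL hXr hXs hYr.neg hYs.neg (by simpa using hcol))).congr ?_
    filter_upwards [hne] with θ hθ
    rw [ordFn, dplus_eq_upperLength _ _ hθ, dminus_eq_upperLength _ _ hθ]
    rfl
end
end

section
/- Let e₁ be the oriented segment from (0,0) to (l,0) with l > 0, and let e₂ be a segment in ℝ² whose intersection with the closed upper half-plane {(x,y) : y ≥ 0} is nonempty, with endpoints (x₁,y₁) and (x₂,y₂). Then d₊(e₁,e₂) = |f(x₂/l) − f(x₁/l)| · l, where f(z) = max(min(z,1),0). -/
/-!
For `e₁` from `(0,0)` to `(l,0)` the frame of `e₁` is the standard one, so `d₊(e₁,e₂)` is the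
length of `[0,l] ∩ π(e₂ ∩ H)`, with `H` the closed upper half-plane and `π` the first
coordinate. By hypothesis `e₂ ∩ H` is the segment from `(x₁,y₁)` to `(x₂,y₂)`, which `π`, being
linear, maps onto the interval between `x₁` and `x₂`; the length of its intersection with `[0,l]`
is the difference of the endpoints clamped to `[0,l]`.
-/

open MeasureTheory Filter Topology Set

noncomputable section
open scoped Classical

@[simp] lemma pt_apply_zero (a b : ℝ) : pt a b 0 = a := rfl

@[simp] lemma pt_apply_one (a b : ℝ) : pt a b 1 = b := rfl

lemma pt_coords (z : Pt) : pt (z 0) (z 1) = z := by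
  ext i; fin_cases i <;> rfl

lemma image_coord_zero (S : Set Pt) : (fun z : Pt => z 0) '' S = {x | ∃ y, pt x y ∈ S} := by
  ext x
  constructor
  · rintro ⟨z, hz, rfl⟩
    exact ⟨z 1, by rwa [pt_coords]⟩
  · rintro ⟨y, hy⟩
    exact ⟨pt x y, hy, rfl⟩

lemma image_coord_zero_segment (p q : Pt) :
    (fun z : Pt => z 0) '' segment ℝ p q = uIcc (p 0) (q 0) := by
  rw [← segment_eq_uIcc]
  exact image_segment ℝ (EuclideanSpace.proj (0 : Fin 2) : Pt →L[ℝ] ℝ).toAffineMap p q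

lemma dplus_origin {l : ℝ} (hl : 0 < l) (a b : Pt) :
    dplus (pt 0 0) (pt l 0) a b =
      (volume (Icc 0 l ∩ {x : ℝ | ∃ y : ℝ, 0 ≤ y ∧ pt x y ∈ segment ℝ a b})).toReal := by
  have hnorm : ‖pt l 0 - pt 0 0‖ = l := by
    simp [EuclideanSpace.norm_eq, pt, Fin.sum_univ_two, Real.sqrt_sq hl.le]
  have hne : pt 0 0 ≠ pt l 0 := fun h => hl.ne (congrArg (· 0) h)
  have hframe (x y : ℝ) :
      pt 0 0 + x • (l⁻¹ • (pt l 0 - pt 0 0)) +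
        y • pt (-(l⁻¹ • (pt l 0 - pt 0 0)) 1) ((l⁻¹ • (pt l 0 - pt 0 0)) 0) = pt x y := by
    ext i; fin_cases i <;> simp [pt, hl.ne']
  simp only [dplus, if_neg hne, dist_eq_norm', hnorm, hframe]
  rfl

lemma max_min_sub_max_min {l u v : ℝ} (hl : 0 ≤ l) (huv : u ≤ v) :
    max (min l v - max 0 u) 0 = max (min v l) 0 - max (min u l) 0 := by
  grind

lemma volume_Icc_inter_uIcc {l : ℝ} (hl : 0 ≤ l) (u v : ℝ) :
    (volume (Icc 0 l ∩ uIcc u v)).toReal = |max (min v l) 0 - max (min u l) 0| := by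
  wlog huv : u ≤ v generalizing u v
  · rw [uIcc_comm, abs_sub_comm]
    exact this v u (le_of_not_ge huv)
  have hmono : max (min u l) 0 ≤ max (min v l) 0 := by gcongr
  rw [uIcc_of_le huv, Icc_inter_Icc, Real.volume_Icc, ENNReal.toReal_ofReal',
    abs_of_nonneg (sub_nonneg.2 hmono), max_min_sub_max_min hl huv]

lemma max_min_div_mul {l : ℝ} (hl : 0 < l) (x : ℝ) :
    max (min (x / l) 1) 0 * l = max (min x l) 0 := by
  rw [max_mul_of_nonneg _ _ hl.le, min_mul_of_nonneg _ _ hl.le, div_mul_cancel₀ _ hl.ne',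
    one_mul, zero_mul]

/-- Let `e₁` be the oriented segment from `(0,0)` to `(l,0)` with `l > 0`,
and let `e₂` be a segment (from `a` to `b`) whose intersection with the closed upper
half-plane `{(x,y) : y ≥ 0}` is nonempty, with endpoints `(x₁,y₁)` and `(x₂,y₂)`.
Then `d₊(e₁,e₂) = |f(x₂/l) − f(x₁/l)| · l`, where `f(z) = max(min(z,1),0)`. -/
theorem dplus_formula (l x₁ y₁ x₂ y₂ : ℝ) (a b : Pt) (hl : 0 < l)
    (hcap : segment ℝ a b ∩ {z : Pt | 0 ≤ z 1} = segment ℝ (pt x₁ y₁) (pt x₂ y₂)) :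
    dplus (pt 0 0) (pt l 0) a b =
      |max (min (x₂ / l) 1) 0 - max (min (x₁ / l) 1) 0| * l := by
  have hshadow : {x : ℝ | ∃ y : ℝ, 0 ≤ y ∧ pt x y ∈ segment ℝ a b} = uIcc x₁ x₂ := by
    simpa [← hcap, image_coord_zero, and_comm] using
      image_coord_zero_segment (pt x₁ y₁) (pt x₂ y₂)
  rw [dplus_origin hl, hshadow, volume_Icc_inter_uIcc hl.le, ← max_min_div_mul hl x₁,
    ← max_min_div_mul hl x₂, ← sub_mul, abs_mul, abs_of_pos hl]
end
end

section
/- For any linkage L, the set of noncrossing configurations satisfies IGConf₀(L) = ⋂_{n=1}^∞ closure(Annot_L(NConf_{1/n}(L))). -/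
open MeasureTheory Filter Topology Set

noncomputable section
open scoped Classical

/-- A linkage: a finite graph given by an edge-index type `E` with endpoint maps
`fst, snd : E → V` (this also fixes an orientation of each edge), together with a
nonnegative length for each edge (bar). -/
structure Linkage (V E : Type) where
  fst : E → V
  snd : E → V
  len : E → ℝ
  len_nonneg : ∀ e, 0 ≤ len e

variable {V E : Type}

/-- The set `Conf₀(L)` of configurations of a linkage: maps `C : V → ℝ²` realizing
every edge length exactly. -/
def ConfSet (L : Linkage V E) : Set (V → Pt) :=
  {C | ∀ e : E, dist (C (L.fst e)) (C (L.snd e)) = L.len e}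

/-- Configurations of linkages `ε`-related to `L`: each bar length is realized within
`ε` of its length in `L`. -/
def ConfRel (L : Linkage V E) (ε : ℝ) : Set (V → Pt) :=
  {C | ∀ e : E, |dist (C (L.fst e)) (C (L.snd e)) - L.len e| ≤ ε}

/-- The closed segment (bar) assigned to edge `e` by the configuration `C`. -/
def Seg (L : Linkage V E) (C : V → Pt) (e : E) : Set Pt :=
  segment ℝ (C (L.fst e)) (C (L.snd e))

/-- Two vertices are joined by a path of zero-length bars (bars whose endpoints coincide
under the configuration `C`). -/
def ZeroJoined (L : Linkage V E) (C : V → Pt) : V → V → Prop :=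
  Relation.ReflTransGen fun u v =>
    (∃ e : E, (L.fst e = u ∧ L.snd e = v) ∨ (L.fst e = v ∧ L.snd e = u)) ∧ C u = C v

/-- A configuration is nontouching if no two bars intersect except at shared endpoints,
and two vertices are mapped to the same point if and only if they are joined by a path of
zero-length bars. -/
def Nontouching (L : Linkage V E) (C : V → Pt) : Prop :=
  (∀ u v : V, C u = C v ↔ ZeroJoined L C u v) ∧
  (∀ e f : E, e ≠ f → ∀ z ∈ Seg L C e ∩ Seg L C f,
    (∃ u : V, (L.fst e = u ∨ L.snd e = u) ∧ C u = z) ∧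
    (∃ v : V, (L.fst f = v ∨ L.snd f = v) ∧ C v = z))

/-- `NConf_ε(L)`: the nontouching configurations of linkages `ε`-related to `L`. -/
def NConf (L : Linkage V E) (ε : ℝ) : Set (V → Pt) :=
  {C | C ∈ ConfRel L ε ∧ Nontouching L C}

/-- The annotation function `Annot_L`, sending a map `C : V → ℝ²` to the pair `(C, A)`
where `A i j = Ord(C(eᵢ), C(eⱼ))`. -/
def Annot (L : Linkage V E) (C : V → Pt) : (V → Pt) × (E → E → ℝ) :=
  (C, fun i j => ordFn (C (L.fst i)) (C (L.snd i)) (C (L.fst j)) (C (L.snd j)))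

/-- The space `IGConf₀(L)` of noncrossing configurations of `L`:
`(Conf₀(L) × ℝ^{E×E}) ∩ closure (Annot_L(NConf₁(L)))`. -/
def IGConf (L : Linkage V E) : Set ((V → Pt) × (E → E → ℝ)) :=
  (ConfSet L ×ˢ (Set.univ : Set (E → E → ℝ))) ∩ closure (Annot L '' NConf L 1)

namespace Linkage

variable (L : Linkage V E)

theorem continuous_lengthDefect (e : E) :
    Continuous fun C : V → Pt => |dist (C (L.fst e)) (C (L.snd e)) - L.len e| := by
  fun_prop

theorem isClosed_confRel (ε : ℝ) : IsClosed (ConfRel L ε) := by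
  simp only [ConfRel, Set.ofPred_forall]
  exact isClosed_iInter fun e => isClosed_le (L.continuous_lengthDefect e) continuous_const

theorem isOpen_setOf_lengthDefect_lt [Finite E] (ε : ℝ) :
    IsOpen {C : V → Pt | ∀ e, |dist (C (L.fst e)) (C (L.snd e)) - L.len e| < ε} := by
  simp only [Set.ofPred_forall]
  exact isOpen_iInter_of_finite fun e => isOpen_lt (L.continuous_lengthDefect e) continuous_const

theorem mem_confSet_of_forall_mem_confRel {C : V → Pt}
    (h : ∀ n : ℕ, 1 ≤ n → C ∈ ConfRel L (1 / (n : ℝ))) : C ∈ ConfSet L := by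
  intro e
  refine eq_of_abs_sub_nonpos (le_of_forall_pos_le_add fun ε hε => ?_)
  obtain ⟨n, hn⟩ := exists_nat_one_div_lt hε
  have h_defect := h (n + 1) (Nat.le_add_left 1 n) e
  push_cast at h_defect
  linarith

theorem closure_image_annot_nconf_subset (ε : ℝ) :
    closure (Annot L '' NConf L ε) ⊆ Prod.fst ⁻¹' ConfRel L ε :=
  closure_minimal (by rintro _ ⟨C, hC, rfl⟩; exact hC.1)
    ((L.isClosed_confRel ε).preimage continuous_fst)

/-- The length defects are continuous and vanish at `x.1`, so near `x` every approximant
from `NConf L δ` already lies in `NConf L ε`. -/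
theorem mem_closure_image_annot_nconf_of_mem_confSet [Finite E] {x : (V → Pt) × (E → E → ℝ)}
    (hx : x.1 ∈ ConfSet L) {δ : ℝ} (hδ : x ∈ closure (Annot L '' NConf L δ)) {ε : ℝ}
    (hε : 0 < ε) : x ∈ closure (Annot L '' NConf L ε) := by
  set W := Prod.fst ⁻¹' {C : V → Pt | ∀ e, |dist (C (L.fst e)) (C (L.snd e)) - L.len e| < ε}
  have hxW : x ∈ W := fun e => by simpa [hx e] using hε
  refine closure_mono ?_
    (((L.isOpen_setOf_lengthDefect_lt ε).preimage continuous_fst).inter_closure ⟨hxW, hδ⟩)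
  rintro _ ⟨hW, C, hC, rfl⟩
  exact ⟨C, ⟨fun e => (hW e).le, hC.2⟩, rfl⟩

end Linkage

theorem igconf_eq_iInter_general [Fintype E] (L : Linkage V E) :
    IGConf L = ⋂ (n : ℕ) (_ : 1 ≤ n), closure (Annot L '' NConf L (1 / (n : ℝ))) := by
  ext x
  simp only [IGConf, Set.mem_inter_iff, Set.mem_prod, Set.mem_univ, and_true, Set.mem_iInter]
  constructor
  · rintro ⟨hx, hcl⟩ n hn
    exact L.mem_closure_image_annot_nconf_of_mem_confSet hx hcl (by positivity)
  · intro h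
    refine ⟨L.mem_confSet_of_forall_mem_confRel fun n hn => ?_, by simpa using h 1 le_rfl⟩
    exact L.closure_image_annot_nconf_subset _ (h n hn)

/-- For any linkage `L`, the set of noncrossing configurations satisfies
`IGConf₀(L) = ⋂_{n=1}^∞ closure(Annot_L(NConf_{1/n}(L)))`. -/
theorem igconf_eq_iInter [Fintype V] [Fintype E] (L : Linkage V E) :
    IGConf L = ⋂ (n : ℕ) (_ : 1 ≤ n), closure (Annot L '' NConf L (1 / (n : ℝ))) :=
  igconf_eq_iInter_general L
end
end

section
/- For any linkage L and any ε with 0 < ε ≤ 1, one has IGConf₀(L) = (Conf₀(L) × ℝ^{E(G)×E(G)}) ∩ closure(Annot_L(NConf_ε(L))); that is, replacing 1 by any positive ε ≤ 1 in the definition of noncrossing configurations yields the same set. -/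
open MeasureTheory Filter Topology Set

noncomputable section
open scoped Classical

variable {V E : Type}

theorem NConf_mono (L : Linkage V E) {δ ε : ℝ} (h : δ ≤ ε) : NConf L δ ⊆ NConf L ε :=
  fun _ ⟨hrel, hnt⟩ => ⟨fun e => (hrel e).trans h, hnt⟩

theorem isOpen_setOf_abs_dist_sub_len_lt [Finite E] (L : Linkage V E) (ε : ℝ) :
    IsOpen {D : V → Pt | ∀ e, |dist (D (L.fst e)) (D (L.snd e)) - L.len e| < ε} := by
  simp only [ofPred_forall]
  exact isOpen_iInter_of_finite fun e => isOpen_lt (by fun_prop) continuous_const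

/-- Near an exact configuration every configuration is `ε`-related to `L`, so only the germ
of `NConf L δ` at `C` matters for the closure. -/
theorem mem_closure_annot_NConf_of_mem_ConfSet [Finite E] (L : Linkage V E) {δ ε : ℝ}
    (hε : 0 < ε) {C : V → Pt} {A : E → E → ℝ} (hC : C ∈ ConfSet L)
    (h : (C, A) ∈ closure (Annot L '' NConf L δ)) :
    (C, A) ∈ closure (Annot L '' NConf L ε) := by
  set U : Set ((V → Pt) × (E → E → ℝ)) := Prod.fst ⁻¹'
    {D | ∀ e, |dist (D (L.fst e)) (D (L.snd e)) - L.len e| < ε}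
  have hU : IsOpen U := (isOpen_setOf_abs_dist_sub_len_lt L ε).preimage continuous_fst
  have hCU : (C, A) ∈ U := fun e => by simpa [hC e] using hε
  refine closure_mono ?_ (hU.inter_closure ⟨hCU, h⟩)
  rintro _ ⟨hD, D, ⟨-, hnt⟩, rfl⟩
  exact ⟨D, ⟨fun e => (hD e).le, hnt⟩, rfl⟩

theorem igconf_eq_of_eps_general [Fintype E] (L : Linkage V E) (ε : ℝ)
    (hε₀ : 0 < ε) (hε₁ : ε ≤ 1) :
    IGConf L =
      (ConfSet L ×ˢ (Set.univ : Set (E → E → ℝ))) ∩ closure (Annot L '' NConf L ε) := by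
  ext ⟨C, A⟩
  refine and_congr_right fun hC => ⟨?_, ?_⟩
  · exact mem_closure_annot_NConf_of_mem_ConfSet L hε₀ hC.1
  · exact fun h => closure_mono (image_mono (NConf_mono L hε₁)) h

/-- For any linkage `L` and any `ε` with `0 < ε ≤ 1`,
`IGConf₀(L) = (Conf₀(L) × ℝ^{E×E}) ∩ closure(Annot_L(NConf_ε(L)))`; that is, replacing `1`
by any positive `ε ≤ 1` in the definition of noncrossing configurations yields the same
set. -/
theorem igconf_eq_of_eps [Fintype V] [Fintype E] (L : Linkage V E) (ε : ℝ)
    (hε₀ : 0 < ε) (hε₁ : ε ≤ 1) :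
    IGConf L =
      (ConfSet L ×ˢ (Set.univ : Set (E → E → ℝ))) ∩ closure (Annot L '' NConf L ε) :=
  igconf_eq_of_eps_general L ε hε₀ hε₁
end
end
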